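/- L∞ bound of the 1-D post-processing: Let N ≥ 2, Δx > 0, K ≥ 0, and let Ū*_j, U*_{j+1/2} ∈ ℝ (j ∈ ℤ/Nℤ, periodic) satisfy |Ū*_j| ≤ K and |U*_{j+1/2}| ≤ K for all j. Then the reconstructed one-sided values satisfy |U^{*,−}_{j+1/2}| ≤ K and |U^{*,+}_{j+1/2}| ≤ K, the corrected interface values satisfy |U**_{j+1/2}| ≤ K, and the corrected cell averages satisfy |Ū_j^{new}| ≤ K, for all j ∈ ℤ/Nℤ. -/
import Mathlib


/-- The minmod function of two real numbers: the minimum if both are positive,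
the maximum if both are negative, and `0` otherwise. -/
noncomputable def minmod2 (c₁ c₂ : ℝ) : ℝ :=
  if 0 < c₁ ∧ 0 < c₂ then min c₁ c₂
  else if c₁ < 0 ∧ c₂ < 0 then max c₁ c₂
  else 0

/-- The slope `(U_x)*_j = 2·minmod((Ū*_j − U*_{j−1/2})/Δx, (U*_{j+1/2} − Ū*_j)/Δx)`.
Here `Ubar j = Ū*_j` and `Uhalf j = U*_{j+1/2}` (periodic indexing by `ZMod N`). -/
noncomputable def ppSlope {N : ℕ} (Δx : ℝ) (Ubar Uhalf : ZMod N → ℝ) (j : ZMod N) : ℝ :=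
  2 * minmod2 ((Ubar j - Uhalf (j - 1)) / Δx) ((Uhalf j - Ubar j) / Δx)

/-- The one-sided value `U^{*,−}_{j+1/2} = Ū*_j + (Δx/2)(U_x)*_j`. -/
noncomputable def ppUminus {N : ℕ} (Δx : ℝ) (Ubar Uhalf : ZMod N → ℝ) (j : ZMod N) : ℝ :=
  Ubar j + Δx / 2 * ppSlope Δx Ubar Uhalf j

/-- The one-sided value `U^{*,+}_{j+1/2} = Ū*_{j+1} − (Δx/2)(U_x)*_{j+1}`. -/
noncomputable def ppUplus {N : ℕ} (Δx : ℝ) (Ubar Uhalf : ZMod N → ℝ) (j : ZMod N) : ℝ :=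
  Ubar (j + 1) - Δx / 2 * ppSlope Δx Ubar Uhalf (j + 1)

/-- The corrected interface value `U**_{j+1/2} = ½(U^{*,−}_{j+1/2} + U^{*,+}_{j+1/2})`. -/
noncomputable def ppUstarstar {N : ℕ} (Δx : ℝ) (Ubar Uhalf : ZMod N → ℝ) (j : ZMod N) : ℝ :=
  (ppUminus Δx Ubar Uhalf j + ppUplus Δx Ubar Uhalf j) / 2

/-- The post-processed cell average `Ū_j^{new} = ½(U**_{j−1/2} + U**_{j+1/2})`. -/
noncomputable def ppUnew {N : ℕ} (Δx : ℝ) (Ubar Uhalf : ZMod N → ℝ) (j : ZMod N) : ℝ :=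
  (ppUstarstar Δx Ubar Uhalf (j - 1) + ppUstarstar Δx Ubar Uhalf j) / 2


lemma minmod_bound_minus (Δx K a b c : ℝ) (hΔx : 0 < Δx)
    (ha : |a| ≤ K) (hb : |b| ≤ K) :
    |a + Δx * minmod2 ((a - c) / Δx) ((b - a) / Δx)| ≤ K := by
  rw [abs_le] at ha hb ⊢
  unfold minmod2
  split_ifs with h1 h2
  · obtain ⟨hp1, hp2⟩ := h1
    have hmin0 : 0 ≤ min ((a - c) / Δx) ((b - a) / Δx) := le_min hp1.le hp2.le
    have hmin2 : min ((a - c) / Δx) ((b - a) / Δx) ≤ (b - a) / Δx := min_le_right _ _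
    constructor
    · nlinarith
    · nlinarith [mul_le_mul_of_nonneg_left hmin2 hΔx.le,
        mul_div_cancel₀ (b - a) (ne_of_gt hΔx)]
  · obtain ⟨hn1, hn2⟩ := h2
    have hmax0 : max ((a - c) / Δx) ((b - a) / Δx) ≤ 0 := max_le hn1.le hn2.le
    have hmax2 : (b - a) / Δx ≤ max ((a - c) / Δx) ((b - a) / Δx) := le_max_right _ _
    constructor
    · nlinarith [mul_le_mul_of_nonneg_left hmax2 hΔx.le,
        mul_div_cancel₀ (b - a) (ne_of_gt hΔx)]
    · nlinarith
  · simpa using ha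

lemma minmod_bound_plus (Δx K a b c : ℝ) (hΔx : 0 < Δx)
    (ha : |a| ≤ K) (hc : |c| ≤ K) :
    |a - Δx * minmod2 ((a - c) / Δx) ((b - a) / Δx)| ≤ K := by
  rw [abs_le] at ha hc ⊢
  unfold minmod2
  split_ifs with h1 h2
  · obtain ⟨hp1, hp2⟩ := h1
    have hmin0 : 0 ≤ min ((a - c) / Δx) ((b - a) / Δx) := le_min hp1.le hp2.le
    have hmin1 : min ((a - c) / Δx) ((b - a) / Δx) ≤ (a - c) / Δx := min_le_left _ _
    constructor
    · nlinarith [mul_le_mul_of_nonneg_left hmin1 hΔx.le,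
        mul_div_cancel₀ (a - c) (ne_of_gt hΔx)]
    · nlinarith
  · obtain ⟨hn1, hn2⟩ := h2
    have hmax0 : max ((a - c) / Δx) ((b - a) / Δx) ≤ 0 := max_le hn1.le hn2.le
    have hmax1 : (a - c) / Δx ≤ max ((a - c) / Δx) ((b - a) / Δx) := le_max_left _ _
    constructor
    · nlinarith
    · nlinarith [mul_le_mul_of_nonneg_left hmax1 hΔx.le,
        mul_div_cancel₀ (a - c) (ne_of_gt hΔx)]
  · simpa using ha

/-- L∞ bound of the 1-D post-processing: if all input cell averages and interface
values are bounded by `K` in absolute value, then so are the reconstructed one-sided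
values, the corrected interface values, and the corrected cell averages. -/
theorem postprocessing_Linfty_bound (N : ℕ) (hN : 2 ≤ N)
    (Δx : ℝ) (hΔx : 0 < Δx) (K : ℝ) (hK : 0 ≤ K) (Ubar Uhalf : ZMod N → ℝ)
    (hUbar : ∀ j, |Ubar j| ≤ K) (hUhalf : ∀ j, |Uhalf j| ≤ K) :
    ∀ j : ZMod N,
      |ppUminus Δx Ubar Uhalf j| ≤ K ∧ |ppUplus Δx Ubar Uhalf j| ≤ K ∧
      |ppUstarstar Δx Ubar Uhalf j| ≤ K ∧ |ppUnew Δx Ubar Uhalf j| ≤ K := by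
  have hminus : ∀ j : ZMod N, |ppUminus Δx Ubar Uhalf j| ≤ K := by
    intro j
    have := minmod_bound_minus Δx K (Ubar j) (Uhalf j) (Uhalf (j - 1)) hΔx
      (hUbar j) (hUhalf j)
    unfold ppUminus ppSlope
    convert this using 2
    ring
  have hplus : ∀ j : ZMod N, |ppUplus Δx Ubar Uhalf j| ≤ K := by
    intro j
    have := minmod_bound_plus Δx K (Ubar (j + 1)) (Uhalf (j + 1)) (Uhalf j) hΔx
      (hUbar (j + 1)) (hUhalf j)
    unfold ppUplus ppSlope
    have hidx : (j + 1 : ZMod N) - 1 = j := by ring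
    rw [hidx]
    convert this using 2
    ring
  have hss : ∀ j : ZMod N, |ppUstarstar Δx Ubar Uhalf j| ≤ K := by
    intro j
    unfold ppUstarstar
    have h1 := hminus j
    have h2 := hplus j
    rw [abs_le] at h1 h2 ⊢
    constructor <;> [linarith; linarith]
  intro j
  refine ⟨hminus j, hplus j, hss j, ?_⟩
  unfold ppUnew
  have h1 := hss (j - 1)
  have h2 := hss j
  rw [abs_le] at h1 h2 ⊢
  constructor <;> [linarith; linarith]
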